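/- Every dicotic (all-small) game G is infinitesimal: for every positive integer n, the sum of n copies of G is strictly less than 1 and strictly greater than −1. -/

import Mathlib

universe u

namespace SetTheory

/-- Pre-games, as formerly in Mathlib (`SetTheory.PGame`, removed from Mathlib since). -/
inductive PGame : Type (u + 1)
  | mk : ∀ α β : Type u, (α → PGame) → (β → PGame) → PGame

namespace PGame

def LeftMoves : PGame → Type u
  | mk l _ _ _ => l

def RightMoves : PGame → Type u
  | mk _ r _ _ => r

def moveLeft : ∀ g : PGame, LeftMoves g → PGame
  | mk _l _r L _ => L

def moveRight : ∀ g : PGame, RightMoves g → PGame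
  | mk _ _r _ R => R

/-- `x` is an immediate option of `y`. -/
def IsOption' (x y : PGame.{u}) : Prop :=
  (∃ i, y.moveLeft i = x) ∨ ∃ j, y.moveRight j = x

theorem isOption'_wf : WellFounded IsOption'.{u} := by
  constructor
  intro x
  induction x with
  | mk l r L R IHl IHr =>
    constructor
    rintro y (⟨i, rfl⟩ | ⟨j, rfl⟩)
    · exact IHl i
    · exact IHr j

instance : WellFoundedRelation PGame.{u} := ⟨IsOption', isOption'_wf⟩

theorem isOption'_moveLeft (x : PGame.{u}) (i : x.LeftMoves) : IsOption' (x.moveLeft i) x :=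
  Or.inl ⟨i, rfl⟩

theorem isOption'_moveRight (x : PGame.{u}) (j : x.RightMoves) : IsOption' (x.moveRight j) x :=
  Or.inr ⟨j, rfl⟩

instance : Zero PGame.{u} := ⟨⟨PEmpty, PEmpty, PEmpty.elim, PEmpty.elim⟩⟩

instance : One PGame.{u} := ⟨⟨PUnit, PEmpty, fun _ => 0, PEmpty.elim⟩⟩

def star : PGame.{u} := ⟨PUnit, PUnit, fun _ => 0, fun _ => 0⟩

def ofLists (L R : List PGame.{u}) : PGame.{u} :=
  mk (ULift (Fin L.length)) (ULift (Fin R.length)) (fun i => L[i.down.1]) fun j => R[j.down.1]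

def neg : PGame.{u} → PGame.{u}
  | ⟨l, r, L, R⟩ => ⟨r, l, fun i => neg (R i), fun i => neg (L i)⟩

instance : Neg PGame.{u} := ⟨neg⟩

noncomputable def add (x : PGame.{u}) : PGame.{u} → PGame.{u} :=
  PGame.rec (motive := fun _ => PGame.{u} → PGame.{u})
    (fun xl xr _ _ IHxl IHxr y =>
      PGame.rec (motive := fun _ => PGame.{u})
        (fun yl yr yL yR IHyl IHyr =>
          mk (xl ⊕ yl) (xr ⊕ yr)
            (Sum.rec (fun i => IHxl i (mk yl yr yL yR)) IHyl)
            (Sum.rec (fun i => IHxr i (mk yl yr yL yR)) IHyr)) y) x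

noncomputable instance : Add PGame.{u} := ⟨add⟩

/-- The pair (`x ≤ y`, `x ⧏ y`), by the same recursion as in former Mathlib. -/
noncomputable def leLF (x : PGame.{u}) : PGame.{u} → Prop × Prop :=
  PGame.rec (motive := fun _ => PGame.{u} → Prop × Prop)
    (fun xl xr _ _ IHxl IHxr y =>
      PGame.rec (motive := fun _ => Prop × Prop)
        (fun yl yr yL yR IHyl IHyr =>
          ((∀ i, (IHxl i (mk yl yr yL yR)).2) ∧ ∀ j, (IHyr j).2,
           (∃ i, (IHyl i).1) ∨ ∃ j, (IHxr j (mk yl yr yL yR)).1)) y) x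

instance : LE PGame.{u} := ⟨fun x y => (leLF x y).1⟩

/-- As in former Mathlib's `Preorder PGame`: `x < y ↔ x ≤ y ∧ ¬ y ≤ x`. -/
instance : LT PGame.{u} := ⟨fun x y => x ≤ y ∧ ¬ y ≤ x⟩

end PGame

end SetTheory

open SetTheory PGame
open scoped PGame

/-- The game up, ↑ = {0 | *}. -/
def upG : PGame := ofLists [0] [star]

/-- The game down, ↓ = {* | 0}. -/
def downG : PGame := ofLists [star] [0]

/-- `copies n G` is the disjunctive sum of `n` copies of `G`. -/
noncomputable def copies : ℕ → PGame → PGame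
  | 0, _ => 0
  | n + 1, G => copies n G + G

/-- A game is dicotic (all-small) if either it has no options for either player, or
both players have at least one option and every option is dicotic. -/
def Dicotic (G : PGame) : Prop :=
  (IsEmpty G.LeftMoves ∧ IsEmpty G.RightMoves ∨
    Nonempty G.LeftMoves ∧ Nonempty G.RightMoves) ∧
    (∀ i, Dicotic (G.moveLeft i)) ∧ ∀ j, Dicotic (G.moveRight j)
termination_by G
decreasing_by
  all_goals first
    | exact isOption'_moveLeft _ _
    | exact isOption'_moveRight _ _

/-- The dicotic transformation δ: every empty option set is replaced by the single option 0. -/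
def delta : PGame → PGame
  | PGame.mk l r L R =>
    PGame.mk (l ⊕ PLift (IsEmpty l)) (r ⊕ PLift (IsEmpty r))
      (Sum.rec (fun i => delta (L i)) fun _ => 0)
      (Sum.rec (fun j => delta (R j)) fun _ => 0)

/-- A game is infinitesimal if every positive multiple lies strictly between -1 and 1. -/
def Infinitesimal (G : PGame) : Prop :=
  ∀ n : ℕ, 0 < n → copies n G < 1 ∧ -1 < copies n G

/-! A dicotic game `G` satisfies `G ≤ 1` and `¬ 1 ≤ G` simultaneously, by induction on `G`:
every Left option `Gᴸ` is dicotic, so `¬ 1 ≤ Gᴸ`; and `1 ≤ G` fails because either `G` has no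
options at all, whence `G ≤ 0`, or `G` has a Right option `Gᴿ`, which satisfies `Gᴿ ≤ 1`.
Dicotic games are closed under sums and negation, so this bounds `n·G` by `1`, and `-(n·G)` by
`1` as well, which is the bound `-1 < n·G`. -/

namespace SetTheory.PGame

theorem le_iff_forall_leLF {x y : PGame.{u}} :
    x ≤ y ↔ (∀ i, (leLF (x.moveLeft i) y).2) ∧ ∀ j, (leLF x (y.moveRight j)).2 := by
  cases x; cases y; rfl

theorem leLF_snd_iff {x y : PGame.{u}} :
    (leLF x y).2 ↔ (∃ i, x ≤ y.moveLeft i) ∨ ∃ j, x.moveRight j ≤ y := by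
  cases x; cases y; rfl

-- Both orientations are proved together so that the induction hypotheses fit.
theorem leLF_snd_iff_not_le (x y : PGame.{u}) :
    ((leLF x y).2 ↔ ¬ y ≤ x) ∧ ((leLF y x).2 ↔ ¬ x ≤ y) := by
  induction x generalizing y with
  | mk xl xr xL xR ihxl ihxr =>
    induction y with
    | mk yl yr yL yR ihyl ihyr =>
      rw [leLF_snd_iff, leLF_snd_iff, le_iff_forall_leLF, le_iff_forall_leLF, not_and_or,
        not_and_or, not_forall, not_forall, not_forall, not_forall]
      constructor
      · exact or_congr (exists_congr fun i => ((ihyl i).2.not.trans not_not).symm)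
          (exists_congr fun j => ((ihxr j _).2.not.trans not_not).symm)
      · exact or_congr (exists_congr fun i => ((ihxl i _).1.not.trans not_not).symm)
          (exists_congr fun j => ((ihyr j).1.not.trans not_not).symm)

theorem le_iff_forall_not_le {x y : PGame.{u}} :
    x ≤ y ↔ (∀ i, ¬ y ≤ x.moveLeft i) ∧ ∀ j, ¬ y.moveRight j ≤ x := by
  rw [le_iff_forall_leLF]
  exact and_congr (forall_congr' fun _ => (leLF_snd_iff_not_le _ _).1)
    (forall_congr' fun _ => (leLF_snd_iff_not_le _ _).1)

theorem le_zero_of_isEmpty_leftMoves {x : PGame.{u}} [IsEmpty x.LeftMoves] : x ≤ 0 :=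
  le_iff_forall_not_le.2 ⟨isEmptyElim, fun j => PEmpty.elim j⟩

protected theorem neg_neg (x : PGame.{u}) : - -x = x := by
  induction x with
  | mk l r L R ihl ihr =>
    change mk l r (fun i => - -L i) (fun j => - -R j) = mk l r L R
    rw [funext ihl, funext ihr]

instance : InvolutiveNeg PGame.{u} := ⟨PGame.neg_neg⟩

theorem neg_le_neg_iff_and (x y : PGame.{u}) : (-x ≤ -y ↔ y ≤ x) ∧ (-y ≤ -x ↔ x ≤ y) := by
  induction x generalizing y with
  | mk xl xr xL xR ihxl ihxr =>
    induction y with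
    | mk yl yr yL yR ihyl ihyr =>
      rw [le_iff_forall_not_le (x := -mk xl xr xL xR), le_iff_forall_not_le (x := mk yl yr yL yR),
        le_iff_forall_not_le (x := -mk yl yr yL yR), le_iff_forall_not_le (x := mk xl xr xL xR)]
      constructor
      · exact and_comm.trans (and_congr (forall_congr' fun j => not_congr (ihyl j).2)
          (forall_congr' fun i => not_congr (ihxr i _).2))
      · exact and_comm.trans (and_congr (forall_congr' fun j => not_congr (ihxl j _).1)
          (forall_congr' fun i => not_congr (ihyr i).1))

protected theorem neg_lt_neg_iff {x y : PGame.{u}} : -x < -y ↔ y < x :=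
  and_congr (neg_le_neg_iff_and x y).1 (not_congr (neg_le_neg_iff_and x y).2)

end SetTheory.PGame

theorem dicotic_iff {G : PGame} :
    Dicotic G ↔ (IsEmpty G.LeftMoves ∧ IsEmpty G.RightMoves ∨
      Nonempty G.LeftMoves ∧ Nonempty G.RightMoves) ∧
      (∀ i, Dicotic (G.moveLeft i)) ∧ ∀ j, Dicotic (G.moveRight j) := by
  rw [Dicotic]

theorem dicotic_neg {x : PGame} (hx : Dicotic x) : Dicotic (-x) := by
  induction x with
  | mk l r L R ihl ihr =>
    obtain ⟨hopts, hL, hR⟩ := dicotic_iff.1 hx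
    exact dicotic_iff.2 ⟨hopts.imp And.symm And.symm, fun j => ihr j (hR j), fun i => ihl i (hL i)⟩

theorem dicotic_add {x y : PGame} (hx : Dicotic x) (hy : Dicotic y) : Dicotic (x + y) := by
  induction x generalizing y with
  | mk xl xr xL xR ihxl ihxr =>
    induction y with
    | mk yl yr yL yR ihyl ihyr =>
      obtain ⟨hxopts, hxL, hxR⟩ := dicotic_iff.1 hx
      obtain ⟨hyopts, hyL, hyR⟩ := dicotic_iff.1 hy
      refine dicotic_iff.2 ⟨?_, ?_, ?_⟩
      · rcases hxopts with ⟨hxl, hxr⟩ | ⟨⟨i⟩, ⟨j⟩⟩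
        · rcases hyopts with ⟨hyl, hyr⟩ | ⟨⟨i⟩, ⟨j⟩⟩
          · exact Or.inl ⟨isEmpty_sum.2 ⟨hxl, hyl⟩, isEmpty_sum.2 ⟨hxr, hyr⟩⟩
          · exact Or.inr ⟨⟨Sum.inr i⟩, ⟨Sum.inr j⟩⟩
        · exact Or.inr ⟨⟨Sum.inl i⟩, ⟨Sum.inl j⟩⟩
      · rintro (i | i)
        · exact ihxl i (hxL i) hy
        · exact ihyl i (hyL i)
      · rintro (j | j)
        · exact ihxr j (hxR j) hy
        · exact ihyr j (hyR j)

theorem dicotic_copies {G : PGame} (hG : Dicotic G) : ∀ n, Dicotic (copies n G)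
  | 0 => dicotic_iff.2
      ⟨Or.inl ⟨⟨PEmpty.elim⟩, ⟨PEmpty.elim⟩⟩, fun i => PEmpty.elim i, fun j => PEmpty.elim j⟩
  | n + 1 => dicotic_add (dicotic_copies hG n) hG

theorem dicotic_lt_one {x : PGame} (hx : Dicotic x) : x < 1 := by
  induction x with
  | mk l r L R ihl ihr =>
    obtain ⟨hopts, hL, hR⟩ := dicotic_iff.1 hx
    refine ⟨le_iff_forall_not_le.2 ⟨fun i => (ihl i (hL i)).2, fun j => PEmpty.elim j⟩,
      fun h => ?_⟩
    obtain ⟨h_not_le_zero, h_not_right_le⟩ := le_iff_forall_not_le.1 h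
    rcases hopts with ⟨_, _⟩ | ⟨_, ⟨j⟩⟩
    · exact h_not_le_zero PUnit.unit le_zero_of_isEmpty_leftMoves
    · exact h_not_right_le j (ihr j (hR j)).1

theorem stmt5 : ∀ G : PGame, Dicotic G →
    ∀ n : ℕ, 0 < n → copies n G < 1 ∧ -1 < copies n G := by
  intro G hG n _
  have h := dicotic_copies hG n
  refine ⟨dicotic_lt_one h, ?_⟩
  rw [← neg_neg (copies n G), PGame.neg_lt_neg_iff]
  exact dicotic_lt_one (dicotic_neg h)
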